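/- If π is a transportation plan between discrete measures μ, ν each supported on n points, and #spt(π) ≤ 2n − 1, then there exists x̄ ∈ spt(μ) such that π(x̄, ·) is supported on a single point ȳ, and there exists y ∈ spt(ν) such that π(·, y) is supported on a single point; moreover in the first case μ_{x̄} = π_{x̄,ȳ} ≤ ν_{ȳ}. -/

import Mathlib

open Finset

/-- A transportation plan between discrete measures `μ` and `ν`. -/
def IsPlan {X : Type*} [Fintype X] (μ ν : X → ℝ) (π : X → X → ℝ) : Prop :=
  (∀ x y, 0 ≤ π x y) ∧ (∀ x, ∑ y, π x y = μ x) ∧ (∀ y, ∑ x, π x y = ν y)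

/-- Total transport cost of a plan. -/
noncomputable def tcost {X : Type*} [Fintype X] (c π : X → X → ℝ) : ℝ :=
  ∑ x, ∑ y, c x y * π x y

open Classical in
/-- Support of a plan, as a finite set of pairs. -/
noncomputable def spt {X : Type*} [Fintype X] (π : X → X → ℝ) : Finset (X × X) :=
  Finset.univ.filter (fun p => π p.1 p.2 ≠ 0)

open Classical in
/-- Support of a discrete measure. -/
noncomputable def msupp {X : Type*} [Fintype X] (μ : X → ℝ) : Finset X :=
  Finset.univ.filter (fun x => μ x ≠ 0)

/-- An optimal transportation plan. -/
def IsOptimal {X : Type*} [Fintype X] (c : X → X → ℝ) (μ ν : X → ℝ) (π : X → X → ℝ) : Prop :=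
  IsPlan μ ν π ∧ ∀ π' : X → X → ℝ, IsPlan μ ν π' → tcost c π ≤ tcost c π'

/-- A trim plan: optimal with support of minimal cardinality among optimal plans. -/
def IsTrim {X : Type*} [Fintype X] (c : X → X → ℝ) (μ ν : X → ℝ) (π : X → X → ℝ) : Prop :=
  IsOptimal c μ ν π ∧
    ∀ π' : X → X → ℝ, IsOptimal c μ ν π' → (spt π).card ≤ (spt π').card

/-- `L^∞` norm of the cost with respect to a plan: max of `c` on the support. -/
noncomputable def linf {X : Type*} [Fintype X] (c π : X → X → ℝ) : ℝ :=
  (((spt π).image (fun p => c p.1 p.2)).max).unbotD 0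

/-- Optimal transport cost `W_c(μ,ν)`. -/
noncomputable def Wc {X : Type*} [Fintype X] (c : X → X → ℝ) (μ ν : X → ℝ) : ℝ :=
  sInf {r | ∃ π, IsPlan μ ν π ∧ tcost c π = r}

/-- Infinity-Wasserstein cost `W_c^{(∞)}(μ,ν)`. -/
noncomputable def Winf {X : Type*} [Fintype X] (c : X → X → ℝ) (μ ν : X → ℝ) : ℝ :=
  sInf {r | ∃ π, IsPlan μ ν π ∧ linf c π = r}

/-- The deterministic plan `(Id, h)_# σ`. -/
def pushF {X : Type*} [DecidableEq X] (h : X → X) (σ : X → ℝ) : X → X → ℝ :=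
  fun x y => if h x = y then σ x else 0

/-- The deterministic plan `(h, Id)_# σ`. -/
def pushB {X : Type*} [DecidableEq X] (h : X → X) (σ : X → ℝ) : X → X → ℝ :=
  fun x y => if h y = x then σ y else 0

theorem Finset.exists_card_fiber_eq_one {α β : Type*} [DecidableEq β] {s : Finset α}
    {t : Finset β} {f : α → β} (hf : ∀ b ∈ t, ∃ a ∈ s, f a = b) (hst : #s < 2 * #t) :
    ∃ b ∈ t, #{a ∈ s | f a = b} = 1 := by
  obtain ⟨b, hb, hlt⟩ := exists_card_fiber_lt_of_card_lt_mul (f := f) (by rwa [mul_comm] at hst)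
  obtain ⟨a, ha, rfl⟩ := hf b hb
  have hpos : 0 < #{x ∈ s | f x = f a} := card_pos.mpr ⟨a, mem_filter.mpr ⟨ha, rfl⟩⟩
  exact ⟨f a, hb, by omega⟩

theorem mem_spt {X : Type*} [Fintype X] {π : X → X → ℝ} {p : X × X} :
    p ∈ spt π ↔ π p.1 p.2 ≠ 0 := by
  simp [spt]

theorem mem_msupp {X : Type*} [Fintype X] {μ : X → ℝ} {x : X} : x ∈ msupp μ ↔ μ x ≠ 0 := by
  simp [msupp]

theorem card_spt_transpose {X : Type*} [Fintype X] (π : X → X → ℝ) :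
    #(spt fun x y => π y x) = #(spt π) := by
  refine card_bij (fun p _ => p.swap) (fun p hp => ?_) (fun p _ q _ => Prod.swap_inj.mp)
    (fun q hq => ⟨q.swap, ?_, q.swap_swap⟩)
  · simpa [mem_spt] using hp
  · simpa [mem_spt] using hq

namespace IsPlan

variable {X : Type*} [Fintype X] {μ ν : X → ℝ} {π : X → X → ℝ}

theorem transpose (h : IsPlan μ ν π) : IsPlan ν μ fun x y => π y x :=
  ⟨fun x y => h.1 y x, h.2.2, h.2.1⟩

theorem exists_ne_zero_of_ne_zero (h : IsPlan μ ν π) {x : X} (hx : μ x ≠ 0) :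
    ∃ y, π x y ≠ 0 := by
  obtain ⟨y, -, hy⟩ := exists_ne_zero_of_sum_ne_zero ((h.2.1 x).trans_ne hx)
  exact ⟨y, hy⟩

theorem eq_of_row_subset_singleton (h : IsPlan μ ν π) {x y₀ : X}
    (hrow : ∀ y, π x y ≠ 0 → y = y₀) : μ x = π x y₀ := by
  rw [← h.2.1 x]
  exact sum_eq_single y₀ (fun y _ hy => not_not.mp (mt (hrow y) hy)) (by simp)

theorem le_right (h : IsPlan μ ν π) (x y : X) : π x y ≤ ν y := by
  rw [← h.2.2 y]
  exact single_le_sum (fun x _ => h.1 x y) (mem_univ x)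

theorem exists_single_row (h : IsPlan μ ν π) (hcard : #(spt π) < 2 * #(msupp μ)) :
    ∃ x₀, μ x₀ ≠ 0 ∧ ∃ y₀, π x₀ y₀ ≠ 0 ∧ ∀ y, π x₀ y ≠ 0 → y = y₀ := by
  classical
  have hrows : ∀ x ∈ msupp μ, ∃ p ∈ spt π, p.1 = x := fun x hx => by
    obtain ⟨y, hy⟩ := h.exists_ne_zero_of_ne_zero (mem_msupp.mp hx)
    exact ⟨(x, y), mem_spt.mpr hy, rfl⟩
  obtain ⟨x₀, hx₀, hfiber⟩ := exists_card_fiber_eq_one hrows hcard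
  obtain ⟨p, hp⟩ := card_eq_one.mp hfiber
  have hpx₀ : π p.1 p.2 ≠ 0 ∧ p.1 = x₀ := by
    have hp_mem : p ∈ {q ∈ spt π | q.1 = x₀} := hp ▸ mem_singleton_self p
    simpa [mem_spt] using hp_mem
  obtain ⟨hπp, rfl⟩ := hpx₀
  refine ⟨p.1, mem_msupp.mp hx₀, p.2, hπp, fun y hy => ?_⟩
  have hmem : (p.1, y) ∈ ({p} : Finset (X × X)) := hp ▸ mem_filter.mpr ⟨mem_spt.mpr hy, rfl⟩
  exact congrArg Prod.snd (mem_singleton.mp hmem)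

end IsPlan

/-- pigeonhole — if a plan between measures with `n`-point supports has
support of cardinality at most `2n - 1`, some row and some column of the plan each
contain exactly one support point; in the row case `μ x̄ = π x̄ ȳ ≤ ν ȳ`. -/
theorem pigeonhole_single_row_and_column {X : Type*} [Fintype X]
    (μ ν : X → ℝ) (π : X → X → ℝ) (n : ℕ) (hn : 0 < n)
    (hμn : (msupp μ).card = n) (hνn : (msupp ν).card = n)
    (hplan : IsPlan μ ν π)
    (hcard : (spt π).card ≤ 2 * n - 1) :
    (∃ x₀, μ x₀ ≠ 0 ∧ ∃ y₀, π x₀ y₀ ≠ 0 ∧ (∀ y', π x₀ y' ≠ 0 → y' = y₀) ∧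
      μ x₀ = π x₀ y₀ ∧ π x₀ y₀ ≤ ν y₀) ∧
    (∃ y₁, ν y₁ ≠ 0 ∧ ∃! x₁, π x₁ y₁ ≠ 0) := by
  have hlt : #(spt π) < 2 * n := by omega
  obtain ⟨x₀, hμx₀, y₀, hπ, hrow⟩ := hplan.exists_single_row (by rwa [hμn])
  obtain ⟨y₁, hνy₁, x₁, hπ₁, hcol⟩ :=
    hplan.transpose.exists_single_row (by rwa [card_spt_transpose, hνn])
  exact ⟨⟨x₀, hμx₀, y₀, hπ, hrow, hplan.eq_of_row_subset_singleton hrow, hplan.le_right x₀ y₀⟩,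
    y₁, hνy₁, x₁, hπ₁, hcol⟩
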